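/- arXiv:2605.22494 — 3 statements merged into one kernel-verified Lean document; each statement's English description precedes it below -/
import Mathlib

section
/- Let A be an abelian group and ℓ a prime number. Suppose that for every integer m ≥ 1 the map A/ℓA → A/ℓ^{m+1}A induced by multiplication by ℓ^m on A is injective. Then the ℓ-primary torsion subgroup A[ℓ^∞] is a divisible group. -/
open Pointwise

/-- The `ℓ`-primary torsion subgroup `A[ℓ^∞] = {a ∈ A | ℓ^r • a = 0 for some r}`. -/
def lPrimary (ℓ : ℕ) (A : Type*) [AddCommGroup A] : AddSubgroup A where
  carrier := {a | ∃ r : ℕ, ℓ ^ r • a = 0}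
  zero_mem' := ⟨0, by simp⟩
  add_mem' := by
    rintro a b ⟨r, hr⟩ ⟨s, hs⟩
    refine ⟨r + s, ?_⟩
    rw [smul_add, pow_add, mul_comm, mul_smul, hr, smul_zero, mul_comm, mul_smul, hs, smul_zero,
      add_zero]
  neg_mem' := by
    rintro a ⟨r, hr⟩
    exact ⟨r, by rw [smul_neg, hr, neg_zero]⟩

/-- If for every `m ≥ 1` the map `A/ℓA → A/ℓ^{m+1}A` induced by multiplication by `ℓ^m` is
injective, then the `ℓ`-primary torsion subgroup `A[ℓ^∞]` is divisible. -/
theorem stmt7 (ℓ : ℕ) (hℓ : ℓ.Prime) (A : Type*) [AddCommGroup A]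
    (h : ∀ m : ℕ, 1 ≤ m →
      ∀ g : (A ⧸ (ℓ • (⊤ : AddSubgroup A))) →+ (A ⧸ (ℓ ^ (m + 1) • (⊤ : AddSubgroup A))),
        (∀ a : A, g (QuotientAddGroup.mk a) = QuotientAddGroup.mk (ℓ ^ m • a)) →
        Function.Injective g) :
    ∀ d ∈ lPrimary ℓ A, ∀ n : ℕ, 0 < n → ∃ d' ∈ lPrimary ℓ A, n • d' = d := by
  -- Step 1: division by ℓ itself, using the hypothesis.
  have keyℓ : ∀ d ∈ lPrimary ℓ A, ∃ d' ∈ lPrimary ℓ A, ℓ • d' = d := by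
    rintro d ⟨r, hr⟩
    rcases Nat.eq_zero_or_pos r with h0 | hrpos
    · subst h0
      simp only [pow_zero, one_smul] at hr
      exact ⟨0, ⟨0, by simp⟩, by simp [hr]⟩
    · -- build the map g for m = r
      let f : A →+ A ⧸ (ℓ ^ (r + 1) • (⊤ : AddSubgroup A)) :=
        (ℓ ^ r) • (QuotientAddGroup.mk' (ℓ ^ (r + 1) • (⊤ : AddSubgroup A)))
      have hf : ∀ a : A, f a = QuotientAddGroup.mk (ℓ ^ r • a) := by
        intro a
        show (ℓ ^ r) • (QuotientAddGroup.mk a :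
            A ⧸ (ℓ ^ (r + 1) • (⊤ : AddSubgroup A))) = QuotientAddGroup.mk (ℓ ^ r • a)
        rfl
      have hker : ∀ a ∈ (ℓ • (⊤ : AddSubgroup A)), f a = 0 := by
        intro a ha
        rw [AddSubgroup.mem_smul_pointwise_iff_exists] at ha
        obtain ⟨b, -, hb⟩ := ha
        rw [hf, ← hb]
        rw [QuotientAddGroup.eq_zero_iff]
        have : ℓ ^ r • ℓ • b = ℓ ^ (r + 1) • b := by
          rw [pow_succ, mul_smul]
        rw [this]
        exact AddSubgroup.smul_mem_pointwise_smul b (ℓ ^ (r + 1)) ⊤ (by trivial)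
      let g := QuotientAddGroup.lift (ℓ • (⊤ : AddSubgroup A)) f hker
      have hg : ∀ a : A, g (QuotientAddGroup.mk a) = QuotientAddGroup.mk (ℓ ^ r • a) := by
        intro a; exact hf a
      have hinj := h r hrpos g hg
      have : g (QuotientAddGroup.mk d) = g 0 := by
        rw [hg d, hr, map_zero]
        simp
      have hd0 := hinj this
      rw [QuotientAddGroup.eq_zero_iff] at hd0
      have hmem : d ∈ (ℓ • (⊤ : AddSubgroup A)) := hd0
      rw [AddSubgroup.mem_smul_pointwise_iff_exists] at hmem
      obtain ⟨b, -, hb⟩ := hmem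
      refine ⟨b, ⟨r + 1, ?_⟩, hb⟩
      rw [pow_succ, mul_smul, hb, hr]
  -- Step 2: division by a prime p ≠ ℓ, using coprimality.
  have keyp : ∀ p : ℕ, p.Prime → p ≠ ℓ → ∀ d ∈ lPrimary ℓ A,
      ∃ d' ∈ lPrimary ℓ A, p • d' = d := by
    rintro p hp hpℓ d ⟨r, hr⟩
    have hcop : IsCoprime (p : ℤ) ((ℓ : ℤ) ^ r) := by
      apply IsCoprime.pow_right
      rw [Int.isCoprime_iff_gcd_eq_one]
      have := (Nat.coprime_primes hp hℓ).mpr hpℓ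
      simpa [Int.gcd_natCast_natCast] using this
    obtain ⟨u, v, huv⟩ := hcop
    refine ⟨u • d, ⟨r, ?_⟩, ?_⟩
    · rw [smul_comm, hr, smul_zero]
    · have h1 : (1 : ℤ) • d = d := one_smul _ _
      calc p • u • d = (p : ℤ) • u • d := by rw [natCast_zsmul]
        _ = (u * p) • d := by rw [← mul_smul, mul_comm]
        _ = (u * p) • d + (v * ℓ ^ r) • d := by
            rw [mul_smul v, show ((ℓ : ℤ) ^ r) • d = ((ℓ ^ r : ℕ) : ℤ) • d by push_cast; ring_nf,
              natCast_zsmul, hr, smul_zero, add_zero]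
        _ = ((u * p + v * ℓ ^ r) : ℤ) • d := by rw [add_smul]
        _ = d := by rw [huv, one_smul]
  -- Step 3: general n, by strong induction on n reducing to prime factors.
  intro d hd n
  induction n using Nat.strong_induction_on with
  | _ n ih =>
    intro hn
    rcases eq_or_ne n 1 with rfl | hn1
    · exact ⟨d, hd, one_smul _ _⟩
    · have hp := Nat.minFac_prime hn1
      set p := n.minFac with hpdef
      have hpdvd : p ∣ n := Nat.minFac_dvd n
      have hklt : n / p < n := Nat.div_lt_self hn hp.one_lt
      have hkpos : 0 < n / p := Nat.div_pos (Nat.minFac_le hn) hp.pos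
      obtain ⟨d₁, hd₁, hkd₁⟩ := ih (n / p) hklt hkpos
      obtain ⟨d₂, hd₂, hpd₂⟩ : ∃ d₂ ∈ lPrimary ℓ A, p • d₂ = d₁ := by
        rcases eq_or_ne p ℓ with rfl | hne
        · exact keyℓ d₁ hd₁
        · exact keyp p hp hne d₁ hd₁
      refine ⟨d₂, hd₂, ?_⟩
      calc n • d₂ = ((n / p) * p) • d₂ := by rw [Nat.div_mul_cancel hpdvd]
        _ = (n / p) • (p • d₂) := by rw [mul_smul]
        _ = d := by rw [hpd₂, hkd₁]
end

section
/- Let ℓ be a prime and A an abelian group with A ⊗ Q_ℓ/Z_ℓ = 0. Suppose the ℓ-primary torsion subgroup A[ℓ^∞] contains a divisible subgroup B such that the quotient F := A[ℓ^∞]/B has finite exponent. Then there is a surjective group homomorphism A → F which restricts on A[ℓ^∞] to the quotient map A[ℓ^∞] → F, and whose kernel is ℓ-divisible (and is the maximal ℓ-divisible subgroup of A). -/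
open TensorProduct

/-- The Prüfer `ℓ`-group `ℤ[1/ℓ]/ℤ`. -/
abbrev PrueferGroup (ℓ : ℕ) : Type :=
  Localization.Away (ℓ : ℤ) ⧸ (algebraMap ℤ (Localization.Away (ℓ : ℤ))).toAddMonoidHom.range

theorem stmt9_aux_key (ℓ : ℕ) (hℓ : ℓ.Prime) (A : Type*) [AddCommGroup A]
    (hA : Subsingleton (TensorProduct ℤ A (PrueferGroup ℓ))) (a : A) :
    ∃ b : A, ∃ r : ℕ, ℓ ^ r • (a - ℓ • b) = 0 := by
  set R := (algebraMap ℤ (Localization.Away (ℓ : ℤ))).toAddMonoidHom.range with hR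
  let f₁ : ℤ →ₗ[ℤ] Localization.Away (ℓ : ℤ) :=
    (algebraMap ℤ (Localization.Away (ℓ : ℤ))).toAddMonoidHom.toIntLinearMap
  let g : Localization.Away (ℓ : ℤ) →ₗ[ℤ] PrueferGroup ℓ :=
    (QuotientAddGroup.mk' R).toIntLinearMap
  have hexact : Function.Exact f₁ g := by
    intro y
    constructor
    · intro hy
      have : y ∈ R := (QuotientAddGroup.eq_zero_iff y).mp hy
      obtain ⟨x, hx⟩ := this
      exact ⟨x, hx⟩
    · rintro ⟨x, rfl⟩
      exact (QuotientAddGroup.eq_zero_iff _).mpr ⟨x, rfl⟩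
  have hgsurj : Function.Surjective g := QuotientAddGroup.mk'_surjective R
  have hex2 := lTensor_exact (N := Localization.Away (ℓ : ℤ)) (P := PrueferGroup ℓ) A hexact hgsurj
  have hsurj : ∀ x : A ⊗[ℤ] Localization.Away (ℓ : ℤ),
      ∃ b : A, b ⊗ₜ[ℤ] (1 : Localization.Away (ℓ : ℤ)) = x := by
    intro x
    have h0 : (LinearMap.lTensor A g) x = 0 := Subsingleton.elim _ _
    obtain ⟨y, hy⟩ := (hex2 x).mp h0
    refine ⟨TensorProduct.rid ℤ A y, ?_⟩
    have hy' : y = (TensorProduct.rid ℤ A y) ⊗ₜ[ℤ] (1 : ℤ) := by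
      rw [← TensorProduct.rid_symm_apply, LinearEquiv.symm_apply_apply]
    rw [hy'] at hy
    rw [← hy, LinearMap.lTensor_tmul]
    congr 1
    simp [f₁]
  set s : Submonoid.powers (ℓ : ℤ) := ⟨(ℓ : ℤ), Submonoid.mem_powers _⟩ with hs
  obtain ⟨b, hb⟩ := hsurj (a ⊗ₜ[ℤ] Localization.mk 1 s)
  set c : A := (ℓ : ℤ) • b - a with hc
  -- multiply hb by ℓ
  have hmul : (algebraMap ℤ (Localization.Away (ℓ : ℤ)) (ℓ : ℤ)) * Localization.mk 1 s = 1 := by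
    rw [← Localization.mk_one_eq_algebraMap, Localization.mk_mul, mul_one, one_mul]
    exact Localization.mk_self s
  have hb2 : b ⊗ₜ[ℤ] (algebraMap ℤ (Localization.Away (ℓ : ℤ)) (ℓ : ℤ))
      = a ⊗ₜ[ℤ] (1 : Localization.Away (ℓ : ℤ)) := by
    have h2 := congrArg (LinearMap.lTensor A
      (LinearMap.mulLeft ℤ (algebraMap ℤ (Localization.Away (ℓ : ℤ)) (ℓ : ℤ)))) hb
    rw [LinearMap.lTensor_tmul, LinearMap.lTensor_tmul, LinearMap.mulLeft_apply,
      LinearMap.mulLeft_apply, mul_one, hmul] at h2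
    exact h2
  have hb3 : ((ℓ : ℤ) • b) ⊗ₜ[ℤ] (1 : Localization.Away (ℓ : ℤ))
      = a ⊗ₜ[ℤ] (1 : Localization.Away (ℓ : ℤ)) := by
    have e1 : ((ℓ : ℤ) • b) ⊗ₜ[ℤ] (1 : ℤ) = b ⊗ₜ[ℤ] (ℓ : ℤ) := by
      apply (TensorProduct.rid ℤ A).injective
      rw [TensorProduct.rid_tmul, TensorProduct.rid_tmul, one_smul]
    have e2 := congrArg (LinearMap.lTensor A f₁) e1
    rw [LinearMap.lTensor_tmul, LinearMap.lTensor_tmul] at e2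
    have e3 : f₁ (1 : ℤ) = 1 := by simp [f₁]
    have e4 : f₁ (ℓ : ℤ) = algebraMap ℤ (Localization.Away (ℓ : ℤ)) (ℓ : ℤ) := rfl
    rw [e3, e4] at e2
    rw [e2, hb2]
  have hcu : c ⊗ₜ[ℤ] (1 : Localization.Away (ℓ : ℤ)) = 0 := by
    rw [hc, TensorProduct.sub_tmul, hb3, sub_self]
  -- map to the localized module
  let inner : A → (Localization.Away (ℓ : ℤ) →ₗ[ℤ] LocalizedModule (Submonoid.powers (ℓ : ℤ)) A) :=
    fun a' => (LinearMap.toSpanSingleton (Localization.Away (ℓ : ℤ))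
      (LocalizedModule (Submonoid.powers (ℓ : ℤ)) A)
      (LocalizedModule.mk a' 1)).restrictScalars ℤ
  have hinner : ∀ (a' : A) (l : Localization.Away (ℓ : ℤ)),
      inner a' l = l • LocalizedModule.mk a' 1 := fun _ _ => rfl
  have hone : (1 : Localization.Away (ℓ : ℤ))
      = Localization.mk 1 1 := by
    rw [Localization.mk_one_eq_algebraMap, map_one]
  let outer : A →+ (Localization.Away (ℓ : ℤ) →ₗ[ℤ] LocalizedModule (Submonoid.powers (ℓ : ℤ)) A) :=
    { toFun := inner
      map_zero' := by
        ext l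
        rw [hinner]
        induction l using Localization.induction_on with
        | H p =>
          rw [LocalizedModule.mk_smul_mk, smul_zero, LocalizedModule.zero_mk]
          rfl
      map_add' := by
        intro a₁ a₂
        ext l
        rw [LinearMap.add_apply, hinner, hinner, hinner]
        induction l using Localization.induction_on with
        | H p =>
          rw [LocalizedModule.mk_smul_mk, LocalizedModule.mk_smul_mk, LocalizedModule.mk_smul_mk,
            LocalizedModule.mk_add_mk, ← smul_add, ← smul_add,
            LocalizedModule.mk_cancel_common_left] }

  let ψ := TensorProduct.lift outer.toIntLinearMap
  have hψ := congrArg ψ hcu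
  rw [map_zero, TensorProduct.lift.tmul] at hψ
  have hmk : LocalizedModule.mk c (1 : Submonoid.powers (ℓ : ℤ)) = 0 := by
    have h8 : (1 : Localization.Away (ℓ : ℤ)) • LocalizedModule.mk c
        (1 : Submonoid.powers (ℓ : ℤ)) = 0 := hψ
    rw [hone, LocalizedModule.mk_smul_mk, one_smul, one_mul] at h8
    exact h8
  rw [← LocalizedModule.zero_mk (1 : Submonoid.powers (ℓ : ℤ))] at hmk
  obtain ⟨t, ht⟩ := LocalizedModule.mk_eq.mp hmk
  rw [one_smul, one_smul, smul_zero] at ht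
  obtain ⟨r, hr⟩ := t.2
  refine ⟨b, r, ?_⟩
  have ht' : (ℓ : ℤ) ^ r • c = 0 := by
    have h5 : ((ℓ : ℤ)) ^ r = (t : ℤ) := hr
    rw [h5]
    rw [Submonoid.smul_def] at ht
    exact ht
  have h6 : ((ℓ : ℤ) ^ r) • (a - ℓ • b) = 0 := by
    have h7 : a - ℓ • b = -c := by
      rw [hc, neg_sub, natCast_zsmul]
    rw [h7, smul_neg, ht', neg_zero]
  rw [← Nat.cast_pow, natCast_zsmul] at h6
  exact h6

theorem stmt9_aux_main (ℓ : ℕ) (hℓ : ℓ.Prime) (A : Type*) [AddCommGroup A]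
    (key : ∀ a : A, ∃ b : A, ∃ r : ℕ, ℓ ^ r • (a - ℓ • b) = 0)
    (B : AddSubgroup (lPrimary ℓ A))
    (hBdiv : ∀ b ∈ B, ∀ m : ℕ, 0 < m → ∃ b' ∈ B, m • b' = b)
    (hexp : ∃ N : ℕ, 0 < N ∧ ∀ x : (lPrimary ℓ A) ⧸ B, N • x = 0) :
    ∃ φ : A →+ (lPrimary ℓ A) ⧸ B,
      Function.Surjective φ ∧
      (∀ t : lPrimary ℓ A, φ (t : A) = QuotientAddGroup.mk t) ∧
      (∀ x ∈ φ.ker, ∃ y ∈ φ.ker, ℓ • y = x) ∧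
      (∀ D : AddSubgroup A, (∀ x ∈ D, ∃ y ∈ D, ℓ • y = x) → D ≤ φ.ker) := by
  classical
  obtain ⟨N, hN, hNexp⟩ := hexp
  -- the quotient is killed by ℓ^N
  have he : ∀ x : (lPrimary ℓ A) ⧸ B, ℓ ^ N • x = 0 := by
    intro x
    obtain ⟨t, rfl⟩ := QuotientAddGroup.mk_surjective x
    obtain ⟨r, hr⟩ := t.2
    have htr : ℓ ^ r • t = 0 := by
      apply Subtype.ext
      simpa using hr
    have h1 : ℓ ^ r • (QuotientAddGroup.mk t : (lPrimary ℓ A) ⧸ B) = 0 := by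
      have h1' : (QuotientAddGroup.mk (ℓ ^ r • t) : (lPrimary ℓ A) ⧸ B)
          = ℓ ^ r • QuotientAddGroup.mk t := map_nsmul (QuotientAddGroup.mk' B) (ℓ ^ r) t
      rw [← h1', htr]
      rfl
    set d := addOrderOf (QuotientAddGroup.mk t : (lPrimary ℓ A) ⧸ B) with hd
    have hd1 : d ∣ ℓ ^ r := addOrderOf_dvd_of_nsmul_eq_zero h1
    have hd2 : d ∣ N := addOrderOf_dvd_of_nsmul_eq_zero (hNexp (QuotientAddGroup.mk t))
    obtain ⟨k, hk, hdk⟩ := (Nat.dvd_prime_pow hℓ).mp hd1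
    have hkN : k ≤ N := by
      by_contra hcon
      push_neg at hcon
      have h2 : ℓ ^ k ≤ N := Nat.le_of_dvd hN (hdk ▸ hd2)
      have h3 : N < ℓ ^ N := Nat.lt_pow_self hℓ.one_lt
      have h4 : ℓ ^ N < ℓ ^ k := Nat.pow_lt_pow_right hℓ.one_lt hcon
      omega
    have h5 : ℓ ^ N = ℓ ^ (N - k) * ℓ ^ k := by
      rw [← pow_add, Nat.sub_add_cancel hkN]
    rw [h5, mul_smul, ← hdk, hd, addOrderOf_nsmul_eq_zero, smul_zero]
  -- decomposition
  have dec : ∀ (n : ℕ) (a : A), ∃ c : A, ∃ t : lPrimary ℓ A, a = ℓ ^ n • c + ↑t := by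
    intro n
    induction n with
    | zero => exact fun a => ⟨a, 0, by simp⟩
    | succ n ih =>
      intro a
      obtain ⟨c, t, hct⟩ := ih a
      obtain ⟨b, r, hbr⟩ := key c
      have ht' : c - ℓ • b ∈ lPrimary ℓ A := ⟨r, hbr⟩
      refine ⟨b, ℓ ^ n • ⟨c - ℓ • b, ht'⟩ + t, ?_⟩
      have hcoe : ((ℓ ^ n • (⟨c - ℓ • b, ht'⟩ : lPrimary ℓ A) + t : lPrimary ℓ A) : A)
          = ℓ ^ n • (c - ℓ • b) + ↑t := rfl
      rw [hcoe, hct, smul_sub, pow_succ, mul_smul]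
      abel
  -- well-definedness
  have wd : ∀ (c c' : A) (t t' : lPrimary ℓ A), ℓ ^ N • c + ↑t = ℓ ^ N • c' + ↑t' →
      (QuotientAddGroup.mk t : (lPrimary ℓ A) ⧸ B) = QuotientAddGroup.mk t' := by
    intro c c' t t' h
    have h' : (↑t : A) - ↑t' = ℓ ^ N • c' - ℓ ^ N • c :=
      sub_eq_sub_iff_add_eq_add.mpr (by rw [add_comm]; exact h)
    have hsub : (↑t - ↑t' : A) = ℓ ^ N • (c' - c) := by rw [h', ← smul_sub]
    have hdmem : c' - c ∈ lPrimary ℓ A := by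
      obtain ⟨r, hr⟩ := (sub_mem t.2 t'.2 : (↑t - ↑t' : A) ∈ lPrimary ℓ A)
      refine ⟨r + N, ?_⟩
      rw [pow_add, mul_smul, ← hsub, hr]
    have hsubT : t - t' = ℓ ^ N • (⟨c' - c, hdmem⟩ : lPrimary ℓ A) := by
      apply Subtype.ext
      exact hsub
    have h9 : (QuotientAddGroup.mk (t - t') : (lPrimary ℓ A) ⧸ B) = 0 := by
      have h9' : (QuotientAddGroup.mk (ℓ ^ N • (⟨c' - c, hdmem⟩ : lPrimary ℓ A))
            : (lPrimary ℓ A) ⧸ B)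
          = ℓ ^ N • QuotientAddGroup.mk ⟨c' - c, hdmem⟩ :=
        map_nsmul (QuotientAddGroup.mk' B) (ℓ ^ N) _
      rw [hsubT, h9', he]
    rw [← sub_eq_zero]
    simpa using h9
  -- define φ
  choose cf tf hf using dec N
  set φ₀ : A → (lPrimary ℓ A) ⧸ B := fun a => QuotientAddGroup.mk (tf a) with hφ₀
  have hwd : ∀ (a c : A) (t : lPrimary ℓ A),
      a = ℓ ^ N • c + ↑t → φ₀ a = QuotientAddGroup.mk t := by
    intro a c t h
    exact wd (cf a) c (tf a) t (by rw [← hf a, ← h])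
  have hadd : ∀ a₁ a₂ : A, φ₀ (a₁ + a₂) = φ₀ a₁ + φ₀ a₂ := by
    intro a₁ a₂
    have h1 : a₁ + a₂ = ℓ ^ N • (cf a₁ + cf a₂) + ↑(tf a₁ + tf a₂) := by
      have hcoe : ((tf a₁ + tf a₂ : lPrimary ℓ A) : A) = ↑(tf a₁) + ↑(tf a₂) := rfl
      rw [smul_add, hcoe]
      conv_lhs => rw [hf a₁, hf a₂]
      abel
    rw [hwd _ _ _ h1]
    rfl
  refine ⟨AddMonoidHom.mk' φ₀ hadd, ?_, ?_, ?_, ?_⟩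
  · intro x
    obtain ⟨t, rfl⟩ := QuotientAddGroup.mk_surjective x
    exact ⟨↑t, hwd _ 0 t (by simp)⟩
  · intro t
    exact hwd _ 0 t (by simp)
  · -- kernel is ℓ-divisible
    intro x hx
    rw [AddMonoidHom.mem_ker] at hx
    obtain ⟨c, t, hct⟩ := dec (N + 1) x
    have hx2 : x = ℓ ^ N • (ℓ • c) + ↑t := by
      rw [hct, pow_succ, mul_smul]
    have htB : t ∈ B := by
      have h2 := hwd x (ℓ • c) t hx2
      rw [show (AddMonoidHom.mk' φ₀ hadd) x = φ₀ x from rfl] at hx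
      rw [h2] at hx
      exact (QuotientAddGroup.eq_zero_iff t).mp hx
    obtain ⟨b₀, hb₀B, hb₀⟩ := hBdiv t htB ℓ hℓ.pos
    refine ⟨ℓ ^ N • c + ↑b₀, ?_, ?_⟩
    · rw [AddMonoidHom.mem_ker]
      have h3 := hwd (ℓ ^ N • c + ↑b₀) c b₀ rfl
      show φ₀ _ = 0
      rw [h3]
      exact (QuotientAddGroup.eq_zero_iff b₀).mpr hb₀B
    · rw [smul_add, hx2]
      congr 1
      · rw [← mul_smul, ← pow_succ', pow_succ, mul_smul]
      · rw [← hb₀]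
        rfl
  · -- maximality
    intro D hD x hx
    have hiter : ∀ n : ℕ, ∃ y ∈ D, ℓ ^ n • y = x := by
      intro n
      induction n with
      | zero => exact ⟨x, hx, by simp⟩
      | succ n ih =>
        obtain ⟨y, hy, hyx⟩ := ih
        obtain ⟨z, hz, hzy⟩ := hD y hy
        exact ⟨z, hz, by rw [pow_succ, mul_smul, hzy, hyx]⟩
    obtain ⟨y, _, hyx⟩ := hiter N
    rw [AddMonoidHom.mem_ker]
    show φ₀ x = 0
    have h4 := hwd x y 0 (by rw [← hyx]; simp)
    rw [h4]
    simp

/-- Lemma `formel`: let `ℓ` be a prime and `A` an abelian group with `A ⊗ ℚ_ℓ/ℤ_ℓ = 0`.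
If `A[ℓ^∞]` contains a divisible subgroup `B` such that `F := A[ℓ^∞]/B` has finite exponent,
then there is a surjective homomorphism `A → F` restricting on `A[ℓ^∞]` to the quotient map,
whose kernel is `ℓ`-divisible and is the maximal `ℓ`-divisible subgroup of `A`. -/
theorem stmt9 (ℓ : ℕ) (hℓ : ℓ.Prime) (A : Type*) [AddCommGroup A]
    (hA : Subsingleton (TensorProduct ℤ A (PrueferGroup ℓ)))
    (B : AddSubgroup (lPrimary ℓ A))
    (hBdiv : ∀ b ∈ B, ∀ m : ℕ, 0 < m → ∃ b' ∈ B, m • b' = b)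
    (hexp : ∃ N : ℕ, 0 < N ∧ ∀ x : (lPrimary ℓ A) ⧸ B, N • x = 0) :
    ∃ φ : A →+ (lPrimary ℓ A) ⧸ B,
      Function.Surjective φ ∧
      (∀ t : lPrimary ℓ A, φ (t : A) = QuotientAddGroup.mk t) ∧
      (∀ x ∈ φ.ker, ∃ y ∈ φ.ker, ℓ • y = x) ∧
      (∀ D : AddSubgroup A, (∀ x ∈ D, ∃ y ∈ D, ℓ • y = x) → D ≤ φ.ker) := by
  exact stmt9_aux_main ℓ hℓ A (fun a => stmt9_aux_key ℓ hℓ A hA a) B hBdiv hexp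
end

section
/- Let ℓ be a prime and A an abelian group. Let W ⊆ A/ℓA be the image of the ℓ-primary torsion subgroup A[ℓ^∞] under the reduction map A → A/ℓA. Suppose there exists a subgroup V ⊆ A/ℓA which is infinite and satisfies V ∩ W = {0}. Then for every subgroup M ⊆ A whose quotient A/M is a finitely generated abelian group, one has M ⊗ Q_ℓ/Z_ℓ ≠ 0. -/
open Pointwise TensorProduct

theorem tensor_vanish {A : Type*} [AddCommGroup A] (ℓ : ℕ) (M : AddSubgroup A)
    (h : Subsingleton (TensorProduct ℤ M (PrueferGroup ℓ)))
    (m : A) (hm : m ∈ M) :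
    ∃ m' ∈ M, ∃ r : ℕ, (ℓ : ℤ) ^ r • (m - (ℓ:ℤ) • m') = 0 := by
  classical
  set S := Submonoid.powers (ℓ : ℤ) with hS
  set N := LocalizedModule S (↥M) with hN
  have hmkadd : ∀ a b : ↥M, (LocalizedModule.mk (a + b) (1:S) : N)
      = LocalizedModule.mk a 1 + LocalizedModule.mk b 1 := by
    intro a b
    rw [LocalizedModule.mk_add_mk]
    simp
  set ι : ↥M →+ N := AddMonoidHom.mk' (fun m0 => LocalizedModule.mk m0 1) hmkadd with hι
  set K : AddSubgroup N := ι.range with hK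
  have hsmul : ∀ (n : ℤ) (m0 : ↥M),
      (algebraMap ℤ (Localization S)) n • (LocalizedModule.mk m0 1 : N)
        = LocalizedModule.mk (n • m0) 1 := by
    intro n m0
    rw [show (algebraMap ℤ (Localization S)) n = Localization.mk n 1 by
      rw [Localization.mk_eq_mk', IsLocalization.mk'_one],
      LocalizedModule.mk_smul_mk, mul_one]
  set g : ↥M → Localization S →+ (N ⧸ K) := fun m0 =>
    (QuotientAddGroup.mk' K).comp
      (LinearMap.toSpanSingleton (Localization S) N (LocalizedModule.mk m0 1)).toAddMonoidHom
    with hg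
  have hgapply : ∀ (m0 : ↥M) (x : Localization S),
      g m0 x = QuotientAddGroup.mk' K (x • LocalizedModule.mk m0 1) := fun _ _ => rfl
  have hker : ∀ (m0 : ↥M),
      (algebraMap ℤ (Localization S)).toAddMonoidHom.range ≤ (g m0).ker := by
    rintro m0 _ ⟨n, rfl⟩
    simp only [AddMonoidHom.mem_ker, hgapply, RingHom.toAddMonoidHom_eq_coe]
    show QuotientAddGroup.mk' K ((algebraMap ℤ (Localization S)) n • LocalizedModule.mk m0 1) = 0
    rw [hsmul, QuotientAddGroup.mk'_apply, QuotientAddGroup.eq_zero_iff]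
    exact ⟨n • m0, rfl⟩
  set f : ↥M → PrueferGroup ℓ →+ (N ⧸ K) := fun m0 =>
    QuotientAddGroup.lift _ (g m0) (hker m0) with hf
  have hfapply : ∀ (m0 : ↥M) (x : Localization S),
      f m0 (QuotientAddGroup.mk x) = g m0 x := fun _ _ => rfl
  have hfadd : ∀ (a b : ↥M) (x : PrueferGroup ℓ), f (a + b) x = f a x + f b x := by
    intro a b x
    induction x using QuotientAddGroup.induction_on with
    | H y =>
      rw [hfapply, hfapply, hfapply, hgapply, hgapply, hgapply, hmkadd]
      rw [smul_add y (LocalizedModule.mk a 1 : N) (LocalizedModule.mk b 1), map_add]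
  set B : ↥M →ₗ[ℤ] PrueferGroup ℓ →ₗ[ℤ] (N ⧸ K) :=
    (AddMonoidHom.mk' (fun m0 => (f m0).toIntLinearMap)
      (by intro a b; ext x; exact hfadd a b x)).toIntLinearMap with hB
  set ψ := TensorProduct.lift B with hψ
  set sℓ : S := ⟨(ℓ : ℤ), Submonoid.mem_powers _⟩ with hsℓ
  set x1 : PrueferGroup ℓ := QuotientAddGroup.mk (Localization.mk 1 sℓ) with hx1
  set m0 : ↥M := ⟨m, hm⟩ with hm0
  have h0 : (m0 ⊗ₜ[ℤ] x1 : TensorProduct ℤ M (PrueferGroup ℓ)) = 0 := Subsingleton.elim _ _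
  have h1 : ψ (m0 ⊗ₜ[ℤ] x1) = 0 := by rw [h0, map_zero]
  rw [TensorProduct.lift.tmul] at h1
  have h2 : QuotientAddGroup.mk' K (LocalizedModule.mk m0 sℓ) = 0 := by
    have : B m0 x1 = QuotientAddGroup.mk' K (Localization.mk 1 sℓ • LocalizedModule.mk m0 1) := rfl
    rw [this, LocalizedModule.mk_smul_mk, one_smul, mul_one] at h1
    exact h1
  rw [QuotientAddGroup.mk'_apply, QuotientAddGroup.eq_zero_iff] at h2
  obtain ⟨m', hm'⟩ := h2
  have hmk : (LocalizedModule.mk m' 1 : N) = LocalizedModule.mk m0 sℓ := hm'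
  rw [LocalizedModule.mk_eq] at hmk
  obtain ⟨u, hu⟩ := hmk
  obtain ⟨k, hk⟩ := u.2
  refine ⟨(m' : A), m'.2, k, ?_⟩
  have hu' : (ℓ:ℤ)^k • (ℓ:ℤ) • m' = (ℓ:ℤ)^k • m0 := by
    have := hu
    rw [Submonoid.smul_def, Submonoid.smul_def, Submonoid.smul_def, Submonoid.smul_def,
      hsℓ] at this
    simpa [hk] using this
  have := congrArg (Subtype.val) hu'
  push_cast at this
  rw [smul_sub, this, sub_self]

/-- Let `W ⊆ A/ℓA` be the image of `A[ℓ^∞]` under reduction. If there is an infinite subgroup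
`V ⊆ A/ℓA` with `V ∩ W = 0`, then for every subgroup `M ⊆ A` with finitely generated quotient
`A/M`, one has `M ⊗ ℚ_ℓ/ℤ_ℓ ≠ 0`. -/
theorem stmt13 (ℓ : ℕ) (hℓ : ℓ.Prime) (A : Type*) [AddCommGroup A]
    (V : AddSubgroup (A ⧸ (ℓ • (⊤ : AddSubgroup A))))
    (hVinf : Infinite V)
    (hVW : V ⊓ AddSubgroup.map
        (QuotientAddGroup.mk' (ℓ • (⊤ : AddSubgroup A))) (lPrimary ℓ A) = ⊥)
    (M : AddSubgroup A) (hM : AddGroup.FG (A ⧸ M)) :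
    ¬ Subsingleton (TensorProduct ℤ M (PrueferGroup ℓ)) := by
  intro h
  let T : AddSubgroup A := ℓ • (⊤ : AddSubgroup A)
  set π := QuotientAddGroup.mk' T with hπ
  set W := AddSubgroup.map π (lPrimary ℓ A) with hW
  have hmemT : ∀ a : A, ℓ • a ∈ T := fun a =>
    (AddSubgroup.mem_smul_pointwise_iff_exists _ _ _).2 ⟨a, trivial, rfl⟩
  have hMW : ∀ m ∈ M, π m ∈ W := by
    intro m hm
    obtain ⟨m', hm', r, hr⟩ := tensor_vanish ℓ M h m hm
    have ht : m - (ℓ:ℤ) • m' ∈ lPrimary ℓ A := by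
      refine ⟨r, ?_⟩
      rw [← natCast_zsmul]
      push_cast
      exact hr
    have hπeq : π m = π (m - (ℓ:ℤ) • m') := by
      rw [hπ, QuotientAddGroup.mk'_apply, QuotientAddGroup.mk'_apply, QuotientAddGroup.eq_iff_sub_mem]
      have : m - (m - (ℓ:ℤ) • m') = ℓ • m' := by
        rw [natCast_zsmul]; abel
      rw [this]
      exact hmemT m'
    rw [hπeq]
    exact ⟨_, ht, rfl⟩
  set J := M ⊔ T with hJ
  have hTJ : T ≤ J := le_sup_right
  have hMJ : M ≤ J := le_sup_left
  set ρ : (A ⧸ T) →+ (A ⧸ J) :=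
    QuotientAddGroup.map T J (AddMonoidHom.id A) (fun x hx => hTJ hx) with hρ
  have hρπ : ∀ a : A, ρ (π a) = QuotientAddGroup.mk' J a := fun a => rfl
  -- A/J is finite
  have hfg : AddGroup.FG (A ⧸ J) := by
    set σ : (A ⧸ M) →+ (A ⧸ J) :=
      QuotientAddGroup.map M J (AddMonoidHom.id A) (fun x hx => hMJ hx) with hσ
    have hsur : Function.Surjective σ := by
      intro y
      obtain ⟨a, rfl⟩ := QuotientAddGroup.mk'_surjective J y
      exact ⟨QuotientAddGroup.mk' M a, rfl⟩
    exact AddGroup.fg_of_surjective hsur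
  have htor : AddMonoid.IsTorsion (A ⧸ J) := by
    intro x
    obtain ⟨a, rfl⟩ := QuotientAddGroup.mk'_surjective J x
    refine isOfFinAddOrder_iff_nsmul_eq_zero.2 ⟨ℓ, hℓ.pos, ?_⟩
    rw [← map_nsmul, QuotientAddGroup.mk'_apply, QuotientAddGroup.eq_zero_iff]
    exact hTJ (hmemT a)
  have hfin : Finite (A ⧸ J) := AddCommGroup.finite_of_fg_torsion _ htor
  -- V injects into A/J
  have hinj : Function.Injective (fun v : V => ρ v) := by
    have key : ∀ d : V, ρ d = 0 → (d : A ⧸ T) = 0 := by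
      intro d hd
      obtain ⟨a, ha⟩ := QuotientAddGroup.mk'_surjective T (d : A ⧸ T)
      rw [← ha, hρπ, QuotientAddGroup.mk'_apply, QuotientAddGroup.eq_zero_iff] at hd
      obtain ⟨m, hmM, b, hbT, hab⟩ := AddSubgroup.mem_sup.1 hd
      have hπa : π a = π m := by
        rw [hπ, QuotientAddGroup.mk'_apply, QuotientAddGroup.mk'_apply,
          QuotientAddGroup.eq_iff_sub_mem]
        have : a - m = b := by rw [← hab]; abel
        rw [this]; exact hbT
      have : (d : A ⧸ T) ∈ V ⊓ W := ⟨d.2, by rw [← ha, hπa]; exact hMW m hmM⟩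
      rw [hVW] at this
      exact this
    intro v w hvw
    have : ρ ((v - w : V) : A ⧸ T) = 0 := by
      push_cast
      rw [map_sub]
      simpa using sub_eq_zero_of_eq hvw
    have := key (v - w) this
    rw [AddSubgroup.coe_sub, sub_eq_zero] at this
    exact Subtype.ext this
  haveI := hVinf
  haveI : Finite V := Finite.of_injective _ hinj
  exact not_finite ↥V
end
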